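/- arXiv:1605.00911 — 3 statements merged into one kernel-verified Lean document; each statement's English description precedes it below -/
import Mathlib

section
/- Let λ ⊢ n have Frobenius coordinates (a₁,...,a_m | b₁,...,b_m), let k ≥ 1, and let λ∖λ₁ denote the partition of n − λ₁ obtained by deleting the first row of λ, with Frobenius coordinates (a′₁,...,a′_{m′} | b′₁,...,b′_{m′}). Then as an identity of rational functions in z, F_k^{a,b}(z) · (z − a₁ + k/2)/(z − a₁ − k/2) = F_k^{a′,b′}(z + 1). -/
/-!
Write `F_k^{a,b}(z)` as the centred falling factorial `(z + (k-1)/2)^{k↓}` times one factor per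
Frobenius coordinate. Deleting the first row gives `a'_j = a_{j+1} + 1` and `b'_j = b_j - 1`, so
after `z ↦ z + 1` every coordinate factor of `F_k^{a',b'}` is one of `F_k^{a,b}`; dividing by the
factor of `a_1` telescopes the `a`-product. What is left over sits at the end of the diagonal:
either the diagonal keeps its length `m` and `λ_{m+1} = m`, so the telescoped "coordinate"
`λ_{m+1} - (m+1) + 1/2` equals `-1/2`, or the diagonal shrinks and `b_m = 1/2`. In both cases the
unmatched factor is `(z + (k+1)/2) / (z - (k-1)/2)`, which is exactly the ratio of the falling
factorial at `z + 1` to its value at `z`.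
-/

/-- The `i`-th part of a partition (0-indexed, parts in decreasing order, `0` beyond the
number of parts). -/
def partNth (n : ℕ) (l : Nat.Partition n) (i : ℕ) : ℕ :=
  ((l.parts.sort (· ≤ ·)).reverse.getD i 0)

/-- Diagonal length `m` of the partition. -/
def diagLen (n : ℕ) (l : Nat.Partition n) : ℕ :=
  ((Finset.range n).filter (fun i => i < partNth n l i)).card

/-- `λ'_{i+1} = #{j : λ_j ≥ i+1}`, the parts of the conjugate partition. -/
def conjNth (n : ℕ) (l : Nat.Partition n) (i : ℕ) : ℕ :=
  ((Finset.range n).filter (fun j => i < partNth n l j)).card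

/-- Frobenius coordinate `a_i = λ_i − i + 1/2` (0-indexed `i`), as a rational number. -/
def faQ (n : ℕ) (l : Nat.Partition n) (i : ℕ) : ℚ :=
  (partNth n l i : ℚ) - i - 1/2

/-- Frobenius coordinate `b_i = λ′_i − i + 1/2` (0-indexed `i`), as a rational number. -/
def fbQ (n : ℕ) (l : Nat.Partition n) (i : ℕ) : ℚ :=
  (conjNth n l i : ℚ) - i - 1/2

/-- The rational function
`F_k^{a,b}(z) = (z + (k−1)/2)^{k↓} ∏_j (z−a_j−k/2)/(z−a_j+k/2) ∏_j (z+b_j+k/2)/(z+b_j−k/2)`. -/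
noncomputable def Fab (n : ℕ) (l : Nat.Partition n) (k : ℕ) : RatFunc ℚ :=
  (∏ i ∈ Finset.range k, (RatFunc.X + RatFunc.C (((k : ℚ) - 1)/2) - RatFunc.C (i : ℚ))) *
    (∏ j ∈ Finset.range (diagLen n l),
      (RatFunc.X - RatFunc.C (faQ n l j) - RatFunc.C ((k : ℚ)/2)) /
        (RatFunc.X - RatFunc.C (faQ n l j) + RatFunc.C ((k : ℚ)/2))) *
    (∏ j ∈ Finset.range (diagLen n l),
      (RatFunc.X + RatFunc.C (fbQ n l j) + RatFunc.C ((k : ℚ)/2)) /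
        (RatFunc.X + RatFunc.C (fbQ n l j) - RatFunc.C ((k : ℚ)/2)))

/-- Substitution `z ↦ z + 1` in a rational function over `ℚ`. -/
noncomputable def shiftOne (p : RatFunc ℚ) : RatFunc ℚ :=
  RatFunc.eval (RatFunc.C : ℚ →+* RatFunc ℚ) (RatFunc.X + 1) p

open Finset RatFunc

theorem Finset.lt_card_filter_range_iff {p : ℕ → Prop} [DecidablePred p] (hp : Antitone p)
    {n i : ℕ} : i < #{j ∈ range n | p j} ↔ i < n ∧ p i := by
  constructor
  · intro hi
    by_contra hni
    have hsub : {j ∈ range n | p j} ⊆ range i := fun j hj => by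
      rw [mem_filter, mem_range] at hj
      by_contra hji
      have hij : i ≤ j := by simpa using hji
      exact hni ⟨by omega, hp hij hj.2⟩
    simpa using hi.trans_le (card_le_card hsub)
  · rintro ⟨hin, hpi⟩
    have hsub : range (i + 1) ⊆ {j ∈ range n | p j} := fun j hj => by
      rw [mem_range] at hj
      exact mem_filter.mpr ⟨mem_range.mpr (by omega), hp (Nat.lt_succ_iff.mp hj) hpi⟩
    simpa using card_le_card hsub

theorem Multiset.sort_reverse_eq_of_pairwise {α : Type*} [LinearOrder α] {s : Multiset α}
    {r : List α} (hr : r.Pairwise (· ≥ ·)) (hs : (r : Multiset α) = s) :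
    (s.sort (· ≤ ·)).reverse = r := by
  refine List.Perm.eq_of_pairwise' (List.pairwise_reverse.mpr (s.pairwise_sort _)) hr ?_
  rw [← Multiset.coe_eq_coe, Multiset.coe_reverse, Multiset.sort_eq, hs]

section PartNth

variable {n : ℕ} (l : Nat.Partition n)

theorem partNth_antitone : Antitone (partNth n l) := by
  intro i j hij
  have hp : ((l.parts.sort (· ≤ ·)).reverse).Pairwise (· ≥ ·) :=
    List.pairwise_reverse.mpr (l.parts.pairwise_sort _)
  unfold partNth
  rcases lt_or_ge j (l.parts.sort (· ≤ ·)).reverse.length with hj | hj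
  · rw [List.getD_eq_getElem _ _ hj, List.getD_eq_getElem _ _ (hij.trans_lt hj)]
    rcases hij.eq_or_lt with rfl | hlt
    · rfl
    · exact List.pairwise_iff_getElem.mp hp i j _ hj hlt
  · rw [List.getD_eq_default _ _ hj]
    exact Nat.zero_le _

theorem Nat.Partition.card_parts_le : Multiset.card l.parts ≤ n := by
  simpa [l.parts_sum] using Multiset.card_nsmul_le_sum (fun x hx => l.parts_pos hx)

theorem partNth_eq_zero_of_le {i : ℕ} (hi : n ≤ i) : partNth n l i = 0 := by
  apply List.getD_eq_default
  rw [List.length_reverse, Multiset.length_sort]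
  exact l.card_parts_le.trans hi

theorem lt_of_lt_partNth {i j : ℕ} (h : i < partNth n l j) : j < n := by
  by_contra hj
  rw [partNth_eq_zero_of_le l (not_lt.mp hj)] at h
  exact Nat.not_lt_zero _ h

theorem lt_diagLen_iff (i : ℕ) : i < diagLen n l ↔ i < partNth n l i := by
  rw [diagLen, lt_card_filter_range_iff]
  · exact and_iff_right_of_imp (lt_of_lt_partNth l)
  · exact fun i j hij h => (hij.trans_lt h).trans_le (partNth_antitone l hij)

theorem lt_conjNth_iff (i j : ℕ) : j < conjNth n l i ↔ i < partNth n l j := by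
  rw [conjNth, lt_card_filter_range_iff]
  · exact and_iff_right_of_imp (lt_of_lt_partNth l)
  · exact fun j j' hjj' h => h.trans_le (partNth_antitone l hjj')

end PartNth

theorem partNth_succ_of_parts_eq_erase {n n' : ℕ} {l : Nat.Partition n} {l' : Nat.Partition n'}
    (hl' : l'.parts = l.parts.erase (partNth n l 0)) (i : ℕ) :
    partNth n' l' i = partNth n l (i + 1) := by
  have hsorted : ((l.parts.sort (· ≤ ·)).reverse).Pairwise (· ≥ ·) :=
    List.pairwise_reverse.mpr (l.parts.pairwise_sort _)
  have hcoe : (((l.parts.sort (· ≤ ·)).reverse : List ℕ) : Multiset ℕ) = l.parts := by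
    rw [Multiset.coe_reverse, Multiset.sort_eq]
  unfold partNth at hl' ⊢
  generalize (l.parts.sort (· ≤ ·)).reverse = r at hsorted hcoe hl' ⊢
  rw [← hcoe] at hl'
  rcases r with _ | ⟨a, t⟩
  · have : l'.parts = 0 := by simpa using hl'
    simp [this]
  · have ht : (t : Multiset ℕ) = l'.parts := by simpa using hl'.symm
    rw [Multiset.sort_reverse_eq_of_pairwise (List.pairwise_cons.mp hsorted).2 ht]
    simp

theorem Finset.prod_range_add_one_sub_mul {R : Type*} [CommRing R] (y : R) (k : ℕ) :
    (∏ i ∈ range k, (y + 1 - i)) * (y + 1 - k) = (∏ i ∈ range k, (y - i)) * (y + 1) := by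
  rw [← prod_range_succ (fun i : ℕ => y + 1 - i), prod_range_succ', mul_comm]
  push_cast
  simp only [add_sub_add_right_eq_sub, sub_zero, mul_comm]

theorem Finset.prod_range_div_apply_zero {G : Type*} [CommGroupWithZero G] (f : ℕ → G) (m : ℕ)
    (h0 : f 0 ≠ 0) (hm : f m ≠ 0) :
    (∏ j ∈ range m, f j) / f 0 = (∏ j ∈ range m, f (j + 1)) / f m := by
  rw [div_eq_div_iff h0 hm, ← prod_range_succ, prod_range_succ', mul_comm]

section DeleteFirstRow

variable {n n' : ℕ} {l : Nat.Partition n} {l' : Nat.Partition n'}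

theorem faQ_eq_of_partNth_succ (hpart : ∀ i, partNth n' l' i = partNth n l (i + 1)) (j : ℕ) :
    faQ n' l' j = faQ n l (j + 1) + 1 := by
  rw [faQ, faQ, hpart]
  push_cast
  ring

theorem conjNth_eq_of_partNth_succ (hpart : ∀ i, partNth n' l' i = partNth n l (i + 1)) {j : ℕ}
    (hj : j < partNth n l 0) : conjNth n l j = conjNth n' l' j + 1 := by
  have hrows : ∀ i, i < conjNth n' l' j ↔ i + 1 < conjNth n l j := fun i => by
    rw [lt_conjNth_iff, hpart, ← lt_conjNth_iff]
  have hrow0 : 0 < conjNth n l j := (lt_conjNth_iff l j 0).mpr hj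
  have h1 := hrows (conjNth n' l' j)
  have h2 := hrows (conjNth n l j - 1)
  omega

theorem fbQ_eq_of_partNth_succ (hpart : ∀ i, partNth n' l' i = partNth n l (i + 1)) {j : ℕ}
    (hj : j < diagLen n' l') : fbQ n' l' j = fbQ n l j - 1 := by
  have hj0 : j < partNth n l 0 := by
    rw [lt_diagLen_iff, hpart] at hj
    exact hj.trans_le (partNth_antitone l (Nat.zero_le _))
  rw [fbQ, fbQ, conjNth_eq_of_partNth_succ hpart hj0]
  push_cast
  ring

theorem diagLen_cases_of_partNth_succ (hpart : ∀ i, partNth n' l' i = partNth n l (i + 1)) :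
    (diagLen n' l' = diagLen n l ∧ faQ n l (diagLen n l) = -1 / 2) ∨
      (diagLen n' l' + 1 = diagLen n l ∧ fbQ n l (diagLen n' l') = 1 / 2) := by
  set m := diagLen n l
  set m' := diagLen n' l'
  have hm : ∀ i, i < m ↔ i < partNth n l i := lt_diagLen_iff l
  have hm' : ∀ i, i < m' ↔ i < partNth n l (i + 1) := fun i => by
    rw [← hpart]; exact lt_diagLen_iff l' i
  have hanti : ∀ i, partNth n l (i + 1) ≤ partNth n l i := fun i =>
    partNth_antitone l (Nat.le_succ i)
  have hm'_le : m' ≤ m := by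
    by_contra h
    have := (hm' m).mp (by omega)
    have := (hm m).not.mp (lt_irrefl m)
    have := hanti m
    omega
  have hm_le : m ≤ m' + 1 := by
    by_contra h
    have := (hm (m' + 1)).mp (by omega)
    have := (hm' m').not.mp (lt_irrefl m')
    omega
  have hdiag : partNth n l m ≤ m := not_lt.mp ((hm m).not.mp (lt_irrefl m))
  rcases hdiag.lt_or_eq with hlt | heq
  · have hm'_succ : m' + 1 = m := by
      have := hm' (m - 1)
      rw [Nat.sub_add_cancel (by omega)] at this
      omega
    have hconj : conjNth n l m' = m' + 1 := by
      have h1 := (lt_conjNth_iff l m' m').mpr ((hm m').mp (by omega))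
      have h2 := (lt_conjNth_iff l m' (m' + 1)).not.mpr ((hm' m').not.mp (lt_irrefl m'))
      omega
    right
    refine ⟨hm'_succ, ?_⟩
    rw [fbQ, hconj]
    push_cast
    ring
  · have hm'_eq : m' = m := by
      have := hm' (m - 1)
      rcases Nat.eq_zero_or_pos m with h0 | hpos
      · omega
      · rw [Nat.sub_add_cancel hpos] at this
        omega
    left
    refine ⟨hm'_eq, ?_⟩
    rw [faQ, heq]
    ring

end DeleteFirstRow

namespace RatFunc

variable {K : Type*} [Field K]

theorem transcendental_X_add_C (c : K) : Transcendental K (X + C c : RatFunc K) := by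
  convert transcendental_X.aeval (Polynomial.X + Polynomial.C c) (by simp) (by simp)
  simp

noncomputable def translate (c : K) : RatFunc K →ₐ[K] RatFunc K :=
  liftAlgHom (Polynomial.aeval (X + C c)) <| nonZeroDivisors_le_comap_nonZeroDivisors_of_injective _
    (transcendental_iff_injective.mp (transcendental_X_add_C c))

theorem translate_apply (c : K) (p : RatFunc K) :
    translate c p = Polynomial.aeval (X + C c) p.num / Polynomial.aeval (X + C c) p.denom :=
  liftAlgHom_apply _ _ p

@[simp]
theorem translate_X (c : K) : translate c X = X + C c := by
  simp [translate_apply]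

@[simp]
theorem translate_C (c a : K) : translate c (C a) = C a := by
  simp [translate_apply]

theorem eval_C_X_add_C (c : K) (p : RatFunc K) : eval C (X + C c) p = translate c p := by
  simp [eval, translate_apply, Polynomial.aeval_def, algebraMap_eq_C]

theorem X_add_C_ne_zero (c : K) : (X + C c : RatFunc K) ≠ 0 := by
  rw [← algebraMap_X, ← algebraMap_C, ← map_add]
  exact algebraMap_ne_zero (Polynomial.X_add_C_ne_zero c)

end RatFunc

noncomputable def centeredFalling (k : ℕ) (z : RatFunc ℚ) : RatFunc ℚ :=
  ∏ i ∈ range k, (z + C (((k : ℚ) - 1) / 2) - C (i : ℚ))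

noncomputable def aFactor (k : ℕ) (z : RatFunc ℚ) (a : ℚ) : RatFunc ℚ :=
  (z - C a - C ((k : ℚ) / 2)) / (z - C a + C ((k : ℚ) / 2))

noncomputable def bFactor (k : ℕ) (z : RatFunc ℚ) (b : ℚ) : RatFunc ℚ :=
  (z + C b + C ((k : ℚ) / 2)) / (z + C b - C ((k : ℚ) / 2))

noncomputable def frobeniusProduct (k : ℕ) (z : RatFunc ℚ) (m : ℕ) (a b : ℕ → ℚ) :
    RatFunc ℚ :=
  centeredFalling k z * (∏ j ∈ range m, aFactor k z (a j)) *
    ∏ j ∈ range m, bFactor k z (b j)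

theorem centeredFalling_add_one (k : ℕ) {z : RatFunc ℚ}
    (hz : z + C (1 / 2) - C ((k : ℚ) / 2) ≠ 0) :
    centeredFalling k (z + 1) = centeredFalling k z * bFactor k z (1 / 2) := by
  have key := prod_range_add_one_sub_mul (z + C (((k : ℚ) - 1) / 2)) k
  have hnum : z + C (((k : ℚ) - 1) / 2) + 1 = z + C (1 / 2) + C ((k : ℚ) / 2) := by
    simp only [map_div₀, map_sub, map_one, map_natCast, map_ofNat]; ring
  have hden :
      z + C (((k : ℚ) - 1) / 2) + 1 - (k : RatFunc ℚ) = z + C (1 / 2) - C ((k : ℚ) / 2) := by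
    simp only [map_div₀, map_sub, map_one, map_natCast, map_ofNat]; ring
  rw [bFactor, mul_div_assoc', eq_div_iff hz, ← hnum, ← hden, centeredFalling, centeredFalling]
  simpa only [map_natCast, add_right_comm z 1] using key

theorem aFactor_add_one (k : ℕ) (z : RatFunc ℚ) (a : ℚ) :
    aFactor k (z + 1) (a + 1) = aFactor k z a := by
  rw [aFactor, aFactor, map_add, map_one]
  ring

theorem bFactor_add_one (k : ℕ) (z : RatFunc ℚ) (b : ℚ) :
    bFactor k (z + 1) (b - 1) = bFactor k z b := by
  rw [bFactor, bFactor, map_sub, map_one]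
  ring

theorem aFactor_neg_half (k : ℕ) (z : RatFunc ℚ) :
    aFactor k z (-1 / 2) = (bFactor k z (1 / 2))⁻¹ := by
  rw [aFactor, bFactor, inv_div, neg_div, map_neg]
  ring

theorem aFactor_X_ne_zero (k : ℕ) (a : ℚ) : aFactor k X a ≠ 0 := by
  refine div_ne_zero ?_ ?_
  · convert X_add_C_ne_zero (-a - (k : ℚ) / 2) using 1
    rw [map_sub, map_neg]; ring
  · convert X_add_C_ne_zero ((k : ℚ) / 2 - a) using 1
    rw [map_sub]; ring

theorem frobeniusProduct_div_aFactor (k : ℕ) {m m' : ℕ} {a b a' b' : ℕ → ℚ}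
    (ha' : ∀ j, a' j = a (j + 1) + 1) (hb' : ∀ j < m', b' j = b j - 1)
    (hm : (m' = m ∧ a m = -1 / 2) ∨ (m' + 1 = m ∧ b m' = 1 / 2)) :
    frobeniusProduct k X m a b / aFactor k X (a 0) = frobeniusProduct k (X + 1) m' a' b' := by
  have hfalling := centeredFalling_add_one k (z := X) <| by
    convert X_add_C_ne_zero (1 / 2 - (k : ℚ) / 2) using 1
    rw [map_sub]; ring
  have hA :
      ∏ j ∈ range m', aFactor k (X + 1) (a' j) = ∏ j ∈ range m', aFactor k X (a (j + 1)) :=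
    prod_congr rfl fun j _ => by rw [ha', aFactor_add_one]
  have hB : ∏ j ∈ range m', bFactor k (X + 1) (b' j) = ∏ j ∈ range m', bFactor k X (b j) :=
    prod_congr rfl fun j hj => by rw [hb' j (mem_range.mp hj), bFactor_add_one]
  rw [frobeniusProduct, frobeniusProduct, hA, hB, hfalling]
  rcases hm with ⟨rfl, ham⟩ | ⟨rfl, hbm⟩
  · have hshift := prod_range_div_apply_zero (fun j => aFactor k X (a j)) m'
      (aFactor_X_ne_zero k _) (aFactor_X_ne_zero k _)
    rw [ham, aFactor_neg_half, div_inv_eq_mul] at hshift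
    calc _ = centeredFalling k X * ((∏ j ∈ range m', aFactor k X (a j)) / aFactor k X (a 0)) *
          ∏ j ∈ range m', bFactor k X (b j) := by ring
      _ = _ := by rw [hshift]; ring
  · have := aFactor_X_ne_zero k (a 0)
    rw [prod_range_succ', prod_range_succ, hbm]
    field_simp

theorem Fab_eq_frobeniusProduct (n : ℕ) (l : Nat.Partition n) (k : ℕ) :
    Fab n l k = frobeniusProduct k X (diagLen n l) (faQ n l) (fbQ n l) :=
  rfl

theorem shiftOne_frobeniusProduct (k m : ℕ) (a b : ℕ → ℚ) :
    shiftOne (frobeniusProduct k X m a b) = frobeniusProduct k (X + 1) m a b := by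
  rw [shiftOne, ← map_one C, eval_C_X_add_C, map_one]
  simp only [frobeniusProduct, centeredFalling, aFactor, bFactor, map_mul, map_prod, map_div₀,
    map_sub, map_add, translate_X, translate_C, map_one]

theorem Fab_delete_first_row_general (n : ℕ) (l : Nat.Partition n) (k : ℕ)
    (l' : Nat.Partition (n - partNth n l 0))
    (hl' : l'.parts = l.parts.erase (partNth n l 0)) :
    Fab n l k *
        ((RatFunc.X - RatFunc.C (faQ n l 0) + RatFunc.C ((k : ℚ)/2)) /
          (RatFunc.X - RatFunc.C (faQ n l 0) - RatFunc.C ((k : ℚ)/2))) =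
      shiftOne (Fab (n - partNth n l 0) l' k) := by
  have hpart := partNth_succ_of_parts_eq_erase hl'
  rw [Fab_eq_frobeniusProduct, Fab_eq_frobeniusProduct, shiftOne_frobeniusProduct,
    ← frobeniusProduct_div_aFactor k (faQ_eq_of_partNth_succ hpart)
      (fun j => fbQ_eq_of_partNth_succ hpart) (diagLen_cases_of_partNth_succ hpart),
    aFactor, div_div_eq_mul_div, mul_div_assoc]

/-- **Lemma (row-deletion identity).** Let `λ ⊢ n` with Frobenius coordinates `(a|b)`,
`k ≥ 1`, and let `λ∖λ₁ ⊢ n − λ₁` be the partition obtained by deleting the first row of `λ`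
(its parts are the parts of `λ` with one occurrence of `λ₁` removed), with Frobenius
coordinates `(a'|b')`. Then, as an identity of rational functions in `z`,
`F_k^{a,b}(z) · (z − a₁ + k/2)/(z − a₁ − k/2) = F_k^{a',b'}(z + 1)`. -/
theorem Fab_delete_first_row (n : ℕ) (l : Nat.Partition n) (k : ℕ) (hk : 1 ≤ k)
    (l' : Nat.Partition (n - partNth n l 0))
    (hl' : l'.parts = l.parts.erase (partNth n l 0)) :
    Fab n l k *
        ((RatFunc.X - RatFunc.C (faQ n l 0) + RatFunc.C ((k : ℚ)/2)) /
          (RatFunc.X - RatFunc.C (faQ n l 0) - RatFunc.C ((k : ℚ)/2))) =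
      shiftOne (Fab (n - partNth n l 0) l' k) :=
  Fab_delete_first_row_general n l k l' hl'
end

section
/- Let p₁, ..., p_s ∈ ℂ, let d ∈ ℂ, and let R > max_j |p_j|. Then (1/(2πi)) ∮_{|z|=R} ∏_{j=1}^s (z − p_j + d)/(z − p_j) dz = s·d, where the circle |z| = R is traversed once counterclockwise. -/
/-!
Each factor is `1 + d / (z - p_j)`, so the integrand `f` is holomorphic for `‖z‖ ≥ R` and
`z (f z - 1) → s d` as `z → ∞`, i.e. `f z = 1 + s d / z + o(1 / z)`. By Cauchy's theorem the
integral is the same over every circle of radius `r ≥ R`; the `o(1 / z)` remainder then has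
integral at most `2π r · o(1 / r) → 0`, and `1 + s d / z` integrates to `2π i s d`.
-/

open Complex Filter Metric Topology Bornology

section CircleIntegral

variable {E : Type*} [NormedAddCommGroup E] [NormedSpace ℂ E]

theorem circleIntegral_eq_zero_of_tendsto_sub_smul_cobounded {f : ℂ → E} {c : ℂ} {R : ℝ}
    (hR : 0 < R) (hd : ∀ z, R ≤ ‖z - c‖ → DifferentiableAt ℂ f z)
    (hf : Tendsto (fun z ↦ (z - c) • f z) (cobounded ℂ) (𝓝 0)) :
    (∮ z in C(c, R), f z) = 0 := by
  have hconst : ∀ r, R ≤ r → (∮ z in C(c, r), f z) = ∮ z in C(c, R), f z := fun r hr ↦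
    circleIntegral_eq_of_differentiable_on_annulus_off_countable hR hr Set.countable_empty
      (fun z hz ↦ (hd z (by simpa [dist_eq_norm] using hz.2)).continuousAt.continuousWithinAt)
      fun z hz ↦ hd z (le_of_lt (by simpa [dist_eq_norm] using hz.1.2))
  refine norm_le_zero_iff.mp (le_of_forall_pos_le_add fun ε hε ↦ ?_)
  obtain ⟨M, -, hM⟩ := (hasBasis_cobounded_compl_closedBall c).eventually_iff.mp
    (Metric.tendsto_nhds.mp hf (ε / (2 * Real.pi)) (by positivity))
  set r := max R (M + 1)
  have hr : 0 < r := hR.trans_le (le_max_left _ _)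
  rw [zero_add, ← hconst r (le_max_left _ _)]
  calc ‖∮ z in C(c, r), f z‖ ≤ 2 * Real.pi * r * (ε / (2 * Real.pi) / r) := by
        refine circleIntegral.norm_integral_le_of_norm_le_const hr.le fun z hz ↦ ?_
        have hzr : ‖z - c‖ = r := by simpa [dist_eq_norm] using hz
        have := hM (show z ∈ (closedBall c M)ᶜ by simp [dist_eq_norm, hzr, r])
        rw [dist_zero_right, norm_smul, hzr] at this
        rw [le_div_iff₀ hr, mul_comm]
        exact this.le
    _ = ε := by field_simp

theorem circleIntegral_const [CompleteSpace E] (b : E) (c : ℂ) (R : ℝ) :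
    (∮ _ in C(c, R), b) = 0 := by
  have h1 : (∮ z in C(c, R), (1 : ℂ)) = 0 := by
    simpa using circleIntegral.integral_sub_zpow_of_ne (n := 0) (by decide) c c R
  simpa [h1] using circleIntegral.integral_smul_const (fun _ ↦ (1 : ℂ)) b c R

/-- Residue at infinity: `hf` says `f z = b + a / (z - c) + o(1 / z)` as `z → ∞`. -/
theorem circleIntegral_eq_of_tendsto_sub_smul_sub_cobounded [CompleteSpace E] {f : ℂ → E}
    {c : ℂ} {R : ℝ} {a b : E} (hR : 0 < R) (hd : ∀ z, R ≤ ‖z - c‖ → DifferentiableAt ℂ f z)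
    (hf : Tendsto (fun z ↦ (z - c) • (f z - b)) (cobounded ℂ) (𝓝 a)) :
    (∮ z in C(c, R), f z) = (2 * Real.pi * I) • a := by
  set g : ℂ → E := fun z ↦ f z - b - (z - c)⁻¹ • a
  have hc : ∀ z, R ≤ ‖z - c‖ → z - c ≠ 0 := fun z hz h ↦ by
    rw [h, norm_zero] at hz; linarith
  have hinv : ∀ z, R ≤ ‖z - c‖ → DifferentiableAt ℂ (fun z ↦ (z - c)⁻¹ • a) z := fun z hz ↦
    ((differentiableAt_id.sub_const c).inv (hc z hz)).smul_const a
  have hgd : ∀ z, R ≤ ‖z - c‖ → DifferentiableAt ℂ g z := fun z hz ↦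
    ((hd z hz).sub_const b).sub (hinv z hz)
  have hg : (∮ z in C(c, R), g z) = 0 := by
    refine circleIntegral_eq_zero_of_tendsto_sub_smul_cobounded hR hgd ?_
    have := hf.sub_const a
    rw [sub_self] at this
    refine this.congr' ?_
    filter_upwards [eventually_ne_cobounded c] with z hz
    simp only [g, smul_sub, smul_inv_smul₀ (sub_ne_zero.mpr hz)]
  have hint : ∀ h : ℂ → E, (∀ z, R ≤ ‖z - c‖ → DifferentiableAt ℂ h z) →
      CircleIntegrable h c R := fun h hh ↦
    ContinuousOn.circleIntegrable hR.le fun z hz ↦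
      (hh z (by simp_all)).continuousAt.continuousWithinAt
  calc (∮ z in C(c, R), f z) = ∮ z in C(c, R), (g z + (z - c)⁻¹ • a) + b := by simp [g]
    _ = (2 * Real.pi * I) • a := by
      rw [circleIntegral.integral_add
          (hint (fun z ↦ g z + (z - c)⁻¹ • a) fun z hz ↦ (hgd z hz).add (hinv z hz))
          (circleIntegrable_const b c R),
        circleIntegral.integral_add (hint g hgd) (hint _ hinv), hg, circleIntegral_const,
        circleIntegral.integral_smul_const,
        circleIntegral.integral_sub_inv_of_mem_ball (by simpa using hR)]
      simp

end CircleIntegral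

theorem Filter.Tendsto.mul_prod_sub_one {α ι R : Type*} [CommRing R] [TopologicalSpace R]
    [IsTopologicalRing R] {l : Filter α} {t : Finset ι} {u : α → R} {g : ι → α → R} {a : ι → R}
    (hg : ∀ i ∈ t, Tendsto (g i) l (𝓝 1))
    (hu : ∀ i ∈ t, Tendsto (fun x ↦ u x * (g i x - 1)) l (𝓝 (a i))) :
    Tendsto (fun x ↦ u x * (∏ i ∈ t, g i x - 1)) l (𝓝 (∑ i ∈ t, a i)) := by
  classical
  induction t using Finset.induction_on with
  | empty => simpa using tendsto_const_nhds
  | insert i t hi ih =>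
    simp only [Finset.forall_mem_insert] at hg hu
    have hprod : Tendsto (fun x ↦ ∏ j ∈ t, g j x) l (𝓝 1) := by
      simpa using tendsto_finsetProd t hg.2
    have := (hu.1.mul hprod).add (ih hg.2 hu.2)
    rw [mul_one] at this
    simp only [Finset.prod_insert hi, Finset.sum_insert hi]
    exact this.congr fun x ↦ by ring

section Cobounded

variable {𝕜 : Type*} [NormedField 𝕜]

theorem tendsto_sub_inv_cobounded (p : 𝕜) :
    Tendsto (fun z ↦ (z - p)⁻¹) (cobounded 𝕜) (𝓝 0) :=
  tendsto_inv₀_cobounded.comp (tendsto_sub_const_cobounded p)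

theorem tendsto_mul_sub_inv_cobounded (p : 𝕜) :
    Tendsto (fun z ↦ z * (z - p)⁻¹) (cobounded 𝕜) (𝓝 1) := by
  have := ((tendsto_sub_inv_cobounded p).const_mul p).const_add 1
  rw [mul_zero, add_zero] at this
  refine this.congr' ?_
  filter_upwards [eventually_ne_cobounded p] with z hz
  field_simp [sub_ne_zero.mpr hz]
  ring

theorem tendsto_sub_add_div_sub_cobounded (p d : 𝕜) :
    Tendsto (fun z ↦ (z - p + d) / (z - p)) (cobounded 𝕜) (𝓝 1) := by
  have := ((tendsto_sub_inv_cobounded p).const_mul d).const_add 1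
  rw [mul_zero, add_zero] at this
  refine this.congr' ?_
  filter_upwards [eventually_ne_cobounded p] with z hz
  rw [add_div, div_self (sub_ne_zero.mpr hz)]
  ring

theorem tendsto_mul_sub_add_div_sub_sub_one_cobounded (p d : 𝕜) :
    Tendsto (fun z ↦ z * ((z - p + d) / (z - p) - 1)) (cobounded 𝕜) (𝓝 d) := by
  have := (tendsto_mul_sub_inv_cobounded p).const_mul d
  rw [mul_one] at this
  refine this.congr' ?_
  filter_upwards [eventually_ne_cobounded p] with z hz
  rw [add_div, div_self (sub_ne_zero.mpr hz)]
  ring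

end Cobounded

/-- **Lemma (exact contour integral).** Let `p₁, …, p_s ∈ ℂ`, `d ∈ ℂ`, and `R > max_j |p_j|`.
Then `(1/(2πi)) ∮_{|z|=R} ∏_j (z − p_j + d)/(z − p_j) dz = s·d`, the circle `|z| = R`
traversed once counterclockwise. -/
theorem contour_integral_eq (s : ℕ) (p : Fin s → ℂ) (d : ℂ) (R : ℝ)
    (hR : ∀ j, ‖p j‖ < R) :
    (2 * Real.pi * Complex.I)⁻¹ *
        (∮ z in C(0, R), ∏ j : Fin s, (z - p j + d) / (z - p j)) = s * d := by
  obtain rfl | hR0 : s = 0 ∨ 0 < R := by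
    rcases s with _ | s
    · exact .inl rfl
    · exact .inr ((norm_nonneg _).trans_lt (hR 0))
  · simp [circleIntegral_const]
  have hdiff : ∀ z, R ≤ ‖z - 0‖ →
      DifferentiableAt ℂ (fun z ↦ ∏ j : Fin s, (z - p j + d) / (z - p j)) z := by
    intro z hz
    refine DifferentiableAt.fun_finsetProd fun j _ ↦ ?_
    refine ((differentiableAt_id.sub_const _).add_const _).div (differentiableAt_id.sub_const _) ?_
    rw [sub_ne_zero]
    rintro rfl
    exact (hR j).not_ge (by simpa using hz)
  have hlim := Tendsto.mul_prod_sub_one (t := Finset.univ)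
    (fun j _ ↦ tendsto_sub_add_div_sub_cobounded (p j) d)
    (fun j _ ↦ tendsto_mul_sub_add_div_sub_sub_one_cobounded (p j) d)
  rw [circleIntegral_eq_of_tendsto_sub_smul_sub_cobounded hR0 hdiff (by simpa using hlim),
    smul_eq_mul, inv_mul_cancel_left₀ (by simp [Real.pi_ne_zero, I_ne_zero])]
end

section
/- Let C be a conjugacy class of S_n having k ≥ 1 non-fixed points (k ≤ n, with k = n allowed), and let t ≥ 1. Then the expectation of fix(σ) − 1 when σ is drawn from μ_C^{*t} equals (n−1)·(1 − k/(n−1))^t; that is, ∑_{σ ∈ S_n} μ_C^{*t}(σ)·(fix(σ) − 1) = (n−1)·(1 − k/(n−1))^t. -/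
/-- Convolution of two (signed) measures on `S_n`, viewed as functions. -/
noncomputable def conv {n : ℕ} (f g : Equiv.Perm (Fin n) → ℝ) : Equiv.Perm (Fin n) → ℝ :=
  fun s => ∑ u : Equiv.Perm (Fin n), f u * g (u⁻¹ * s)

/-- The `t`-fold convolution power `μ^{*t}`; `μ^{*0}` is the point mass at the identity, so
`μ^{*t}` is the law of the random walk started at the identity after `t` steps from `μ`. -/
noncomputable def convPow {n : ℕ} (f : Equiv.Perm (Fin n) → ℝ) : ℕ → (Equiv.Perm (Fin n) → ℝ)
  | 0 => fun s => if s = 1 then 1 else 0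
  | t + 1 => conv f (convPow f t)

/-- The total variation distance `max_{A ⊆ S_n} |μ(A) − ν(A)|`. -/
noncomputable def tvDist {n : ℕ} (f g : Equiv.Perm (Fin n) → ℝ) : ℝ :=
  ⨆ A : Finset (Equiv.Perm (Fin n)), |∑ s ∈ A, f s - ∑ s ∈ A, g s|

/-- The uniform probability measure on the conjugacy class of `c` in `S_n` (two permutations
are conjugate iff they have the same cycle type). -/
noncomputable def classUnif {n : ℕ} (c : Equiv.Perm (Fin n)) : Equiv.Perm (Fin n) → ℝ :=
  fun s => if s.cycleType = c.cycleType then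
    1 / ((Finset.univ.filter (fun u : Equiv.Perm (Fin n) => u.cycleType = c.cycleType)).card : ℝ)
  else 0

/-- The uniform measure `U_t` on the coset of the alternating group supporting `μ_C^{*t}`
for `C` the class of `c`: `U_t(σ) = (1 + sgn(σ)·sgn(C)^t)/n!`. -/
noncomputable def cosetUnif {n : ℕ} (c : Equiv.Perm (Fin n)) (t : ℕ) :
    Equiv.Perm (Fin n) → ℝ :=
  fun s => (1 + ((Equiv.Perm.sign s : ℤ) : ℝ) * (((Equiv.Perm.sign c : ℤ) : ℝ)) ^ t) /
    (Nat.factorial n : ℝ)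

/-- The number of fixed points of a permutation. -/
def fixedPts {n : ℕ} (s : Equiv.Perm (Fin n)) : ℕ :=
  (Finset.univ.filter (fun x => s x = x)).card

namespace FixAux

variable {n : ℕ}

/-- The conjugacy class of `c` as a finset. -/
noncomputable def Cs (c : Equiv.Perm (Fin n)) : Finset (Equiv.Perm (Fin n)) :=
  Finset.univ.filter (fun u => u.cycleType = c.cycleType)

lemma mem_Cs {c u : Equiv.Perm (Fin n)} : u ∈ Cs c ↔ u.cycleType = c.cycleType := by
  simp [Cs]

lemma conj_card (c : Equiv.Perm (Fin n)) (g : Equiv.Perm (Fin n)) (y x : Fin n) :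
    ((Cs c).filter (fun u => u y = x)).card
      = ((Cs c).filter (fun u => u (g y) = g x)).card := by
  apply Finset.card_bij' (fun u _ => g * u * g⁻¹) (fun u _ => g⁻¹ * u * g)
  · intro u hu
    simp only [Finset.mem_filter, mem_Cs] at hu ⊢
    constructor
    · rw [Equiv.Perm.cycleType_conj]; exact hu.1
    · simp [Equiv.Perm.mul_apply, hu.2]
  · intro u hu
    simp only [Finset.mem_filter, mem_Cs] at hu ⊢
    constructor
    · have := Equiv.Perm.cycleType_conj (σ := u) (τ := g⁻¹)
      simpa using this.trans hu.1
    · have h2 : u (g y) = g x := hu.2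
      simp only [Equiv.Perm.mul_apply]
      rw [show g⁻¹ (u (g y)) = g⁻¹ (g x) from by rw [h2]]
      simp
  · intro u hu; group
  · intro u hu; group

lemma fixedPts_eq (u : Equiv.Perm (Fin n)) : fixedPts u = n - u.support.card := by
  have : (Finset.univ.filter (fun x => u x = x)) = u.supportᶜ := by
    ext x; simp [Equiv.Perm.mem_support]
  rw [fixedPts, this, Finset.card_compl, Fintype.card_fin]

lemma support_card_eq {c u : Equiv.Perm (Fin n)} (hu : u ∈ Cs c) :
    u.support.card = c.support.card := by
  rw [← Equiv.Perm.sum_cycleType, ← Equiv.Perm.sum_cycleType, mem_Cs.mp hu]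

/-- Diagonal count: `n · #{u ∈ C : u x = x} = |C| · (n − k)`. -/
lemma card_fix (c : Equiv.Perm (Fin n)) (x : Fin n) :
    n * ((Cs c).filter (fun u => u x = x)).card
      = (Cs c).card * (n - c.support.card) := by
  have hconst : ∀ y : Fin n, ((Cs c).filter (fun u => u y = y)).card
      = ((Cs c).filter (fun u => u x = x)).card := by
    intro y
    have := conj_card c (Equiv.swap y x) y y
    simpa [Equiv.swap_apply_left] using this
  have hsum : ∑ y : Fin n, ((Cs c).filter (fun u => u y = y)).card
      = (Cs c).card * (n - c.support.card) := by
    have h1 : ∑ y : Fin n, ((Cs c).filter (fun u => u y = y)).card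
        = ∑ u ∈ Cs c, fixedPts u := by
      simp only [Finset.card_filter, fixedPts]
      rw [Finset.sum_comm]
    rw [h1, Finset.sum_congr rfl (fun u hu => by rw [fixedPts_eq, support_card_eq hu])]
    simp [mul_comm]
  have h2 : ∑ y : Fin n, ((Cs c).filter (fun u => u y = y)).card
      = n * ((Cs c).filter (fun u => u x = x)).card := by
    rw [Finset.sum_congr rfl fun y _ => hconst y]
    simp [mul_comm]
  rw [← h2, hsum]

lemma row_sum (c : Equiv.Perm (Fin n)) (y : Fin n) :
    ∑ x : Fin n, ((Cs c).filter (fun u => u y = x)).card = (Cs c).card := by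
  symm
  exact Finset.card_eq_sum_card_fiberwise (fun u _ => Finset.mem_univ (u y))

/-- Off-diagonal count: `n(n−1) · #{u ∈ C : u y = x} = |C| · k` for `y ≠ x`. -/
lemma card_move (c : Equiv.Perm (Fin n)) {y x : Fin n} (h : y ≠ x) :
    n * ((n - 1) * ((Cs c).filter (fun u => u y = x)).card)
      = (Cs c).card * c.support.card := by
  have hconst : ∀ x' ∈ Finset.univ.erase y,
      ((Cs c).filter (fun u => u y = x')).card
        = ((Cs c).filter (fun u => u y = x)).card := by
    intro x' hx'
    have hx'y : x' ≠ y := (Finset.mem_erase.mp hx').1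
    have := conj_card c (Equiv.swap x' x) y x'
    rw [Equiv.swap_apply_of_ne_of_ne (Ne.symm hx'y) h] at this
    rw [Equiv.swap_apply_left] at this
    exact this
  have hsplit : ((Cs c).filter (fun u => u y = y)).card
      + ∑ x' ∈ Finset.univ.erase y, ((Cs c).filter (fun u => u y = x')).card
      = (Cs c).card := by
    rw [← row_sum c y]
    exact Finset.add_sum_erase Finset.univ
      (fun x' => ((Cs c).filter (fun u => u y = x')).card) (Finset.mem_univ y)
  rw [Finset.sum_congr rfl hconst, Finset.sum_const, Finset.card_erase_of_mem (Finset.mem_univ y),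
    Finset.card_univ, Fintype.card_fin, smul_eq_mul] at hsplit
  have h1 : n * ((Cs c).filter (fun u => u y = y)).card
      + n * ((n-1) * ((Cs c).filter (fun u => u y = x)).card) = n * (Cs c).card := by
    rw [← Nat.mul_add, hsplit]
  rw [card_fix c y] at h1
  have hkn : c.support.card ≤ n := by
    simpa using Finset.card_le_card (Finset.subset_univ c.support)
  have h3 : (Cs c).card * (n - c.support.card) + (Cs c).card * c.support.card
      = n * (Cs c).card := by
    rw [← Nat.mul_add, Nat.sub_add_cancel hkn, mul_comm]
  omega

lemma filter_fix (v : Equiv.Perm (Fin n)) :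
    (Finset.univ.filter (fun x => v x = x)) = v.supportᶜ := by
  ext x; simp [Equiv.Perm.mem_support]

lemma fixedPts_card_compl (v : Equiv.Perm (Fin n)) : fixedPts v = v.supportᶜ.card := by
  rw [fixedPts, filter_fix]

/-- The key eigenvalue computation: averaging `fix(·) − 1` over a translate of the class. -/
lemma key (c : Equiv.Perm (Fin n)) (hn : 2 ≤ n) (v : Equiv.Perm (Fin n)) :
    ∑ u ∈ Cs c, ((fixedPts (u * v) : ℝ) - 1)
      = ((Cs c).card : ℝ) *
        ((1 - (c.support.card : ℝ) / ((n : ℝ) - 1)) * ((fixedPts v : ℝ) - 1)) := by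
  have hn0 : (n : ℝ) ≠ 0 := Nat.cast_ne_zero.mpr (by omega)
  have hn2 : (2 : ℝ) ≤ (n : ℝ) := by exact_mod_cast hn
  have hn1 : (n : ℝ) - 1 ≠ 0 := by linarith
  have hkn : c.support.card ≤ n := by
    simpa using Finset.card_le_card (Finset.subset_univ c.support)
  set N : ℝ := ((Cs c).card : ℝ) with hN
  set k : ℝ := (c.support.card : ℝ) with hk'
  have hdiag : ∀ x : Fin n,
      ((((Cs c).filter (fun u => u x = x)).card : ℝ)) = N * ((n : ℝ) - k) / n := by
    intro x
    have h := congrArg (fun m : ℕ => (m : ℝ)) (card_fix c x)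
    push_cast [Nat.cast_sub hkn] at h
    rw [eq_div_iff hn0]
    linarith
  have hoff : ∀ y x : Fin n, y ≠ x →
      ((((Cs c).filter (fun u => u y = x)).card : ℝ)) = N * k / ((n : ℝ) * ((n : ℝ) - 1)) := by
    intro y x h
    have h' := congrArg (fun m : ℕ => (m : ℝ)) (card_move c h)
    push_cast [Nat.cast_sub (by omega : 1 ≤ n)] at h'
    rw [eq_div_iff (mul_ne_zero hn0 hn1)]
    linarith
  have hfv : (v.support.card : ℝ) = (n : ℝ) - (fixedPts v : ℝ) := by
    have h1 : fixedPts v = n - v.support.card := fixedPts_eq v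
    have h2 : v.support.card ≤ n := by
      simpa using Finset.card_le_card (Finset.subset_univ v.support)
    push_cast [h1, Nat.cast_sub h2]
    ring
  have hsum : ∑ u ∈ Cs c, ((fixedPts (u * v) : ℝ))
      = ∑ x : Fin n, ((((Cs c).filter (fun u => u (v x) = x)).card : ℝ)) := by
    have h1 : ∀ u : Equiv.Perm (Fin n), ((fixedPts (u * v) : ℝ))
        = ∑ x : Fin n, (if u (v x) = x then (1 : ℝ) else 0) := by
      intro u
      have h0 : fixedPts (u * v) = (Finset.univ.filter (fun x => u (v x) = x)).card := by
        simp [fixedPts, Equiv.Perm.mul_apply]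
        congr 1
      rw [h0]
      exact (Finset.sum_boole _ _).symm
    rw [Finset.sum_congr rfl (fun u _ => h1 u), Finset.sum_comm]
    exact Finset.sum_congr rfl (fun x _ => Finset.sum_boole _ _)
  have hsplit : ∑ x : Fin n, ((((Cs c).filter (fun u => u (v x) = x)).card : ℝ))
      = (fixedPts v : ℝ) * (N * ((n : ℝ) - k) / n)
        + ((n : ℝ) - (fixedPts v : ℝ)) * (N * k / ((n : ℝ) * ((n : ℝ) - 1))) := by
    rw [← Finset.sum_add_sum_compl v.support]
    have hA : ∑ x ∈ v.support, ((((Cs c).filter (fun u => u (v x) = x)).card : ℝ))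
        = ((n : ℝ) - (fixedPts v : ℝ)) * (N * k / ((n : ℝ) * ((n : ℝ) - 1))) := by
      rw [Finset.sum_congr rfl (fun x hx => hoff (v x) x (Equiv.Perm.mem_support.mp hx))]
      rw [Finset.sum_const, nsmul_eq_mul, hfv]
    have hB : ∑ x ∈ v.supportᶜ, ((((Cs c).filter (fun u => u (v x) = x)).card : ℝ))
        = (fixedPts v : ℝ) * (N * ((n : ℝ) - k) / n) := by
      have : ∀ x ∈ v.supportᶜ, ((((Cs c).filter (fun u => u (v x) = x)).card : ℝ))
          = N * ((n : ℝ) - k) / n := by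
        intro x hx
        have hvx : v x = x := by
          have := Finset.mem_compl.mp hx
          simpa [Equiv.Perm.mem_support] using this
        rw [hvx, hdiag x]
      rw [Finset.sum_congr rfl this, Finset.sum_const, nsmul_eq_mul,
        fixedPts_card_compl v]
    rw [hA, hB]; ring
  rw [Finset.sum_sub_distrib, hsum, hsplit, Finset.sum_const, nsmul_eq_mul, mul_one]
  field_simp
  ring

/-- One convolution step multiplies the expectation of `fix − 1` by `1 − k/(n−1)`. -/
lemma step (c : Equiv.Perm (Fin n)) (hn : 2 ≤ n) (ν : Equiv.Perm (Fin n) → ℝ) :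
    ∑ s : Equiv.Perm (Fin n), conv (classUnif c) ν s * ((fixedPts s : ℝ) - 1)
      = (1 - (c.support.card : ℝ) / ((n : ℝ) - 1)) *
        ∑ s : Equiv.Perm (Fin n), ν s * ((fixedPts s : ℝ) - 1) := by
  have hNne : ((Cs c).card : ℝ) ≠ 0 := by
    have hc : c ∈ Cs c := mem_Cs.mpr rfl
    exact Nat.cast_ne_zero.mpr (Finset.card_ne_zero_of_mem hc)
  have hclass : ∀ u : Equiv.Perm (Fin n), classUnif c u
      = if u ∈ Cs c then 1 / ((Cs c).card : ℝ) else 0 := by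
    intro u
    simp only [classUnif, mem_Cs, Cs]
    congr 1
    simp
  have hinner : ∀ w : Equiv.Perm (Fin n),
      ∑ u : Equiv.Perm (Fin n), classUnif c u * ((fixedPts (u * w) : ℝ) - 1)
        = (1 - (c.support.card : ℝ) / ((n : ℝ) - 1)) * ((fixedPts w : ℝ) - 1) := by
    intro w
    calc ∑ u : Equiv.Perm (Fin n), classUnif c u * ((fixedPts (u * w) : ℝ) - 1)
        = ∑ u : Equiv.Perm (Fin n),
            (if u ∈ Cs c then (1 / ((Cs c).card : ℝ)) * ((fixedPts (u * w) : ℝ) - 1) else 0) := by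
          refine Finset.sum_congr rfl fun u _ => ?_
          rw [hclass u, ite_mul, zero_mul]
      _ = ∑ u ∈ Finset.univ.filter (fun u => u ∈ Cs c),
            (1 / ((Cs c).card : ℝ)) * ((fixedPts (u * w) : ℝ) - 1) :=
          (Finset.sum_filter _ _).symm
      _ = ∑ u ∈ Cs c, (1 / ((Cs c).card : ℝ)) * ((fixedPts (u * w) : ℝ) - 1) := by
          rw [Finset.filter_mem_eq_inter, Finset.univ_inter]
      _ = (1 / ((Cs c).card : ℝ)) * ∑ u ∈ Cs c, ((fixedPts (u * w) : ℝ) - 1) :=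
          (Finset.mul_sum _ _ _).symm
      _ = (1 / ((Cs c).card : ℝ)) * (((Cs c).card : ℝ) *
            ((1 - (c.support.card : ℝ) / ((n : ℝ) - 1)) * ((fixedPts w : ℝ) - 1))) := by
          rw [key c hn w]
      _ = (1 - (c.support.card : ℝ) / ((n : ℝ) - 1)) * ((fixedPts w : ℝ) - 1) := by
          field_simp
  calc ∑ s : Equiv.Perm (Fin n), conv (classUnif c) ν s * ((fixedPts s : ℝ) - 1)
      = ∑ s : Equiv.Perm (Fin n), ∑ u : Equiv.Perm (Fin n),
          classUnif c u * ν (u⁻¹ * s) * ((fixedPts s : ℝ) - 1) := by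
        simp only [conv, Finset.sum_mul]
    _ = ∑ u : Equiv.Perm (Fin n), ∑ s : Equiv.Perm (Fin n),
          classUnif c u * ν (u⁻¹ * s) * ((fixedPts s : ℝ) - 1) := Finset.sum_comm
    _ = ∑ u : Equiv.Perm (Fin n), ∑ w : Equiv.Perm (Fin n),
          classUnif c u * ν w * ((fixedPts (u * w) : ℝ) - 1) := by
        refine Finset.sum_congr rfl fun u _ => ?_
        refine (Fintype.sum_equiv (Equiv.mulLeft u)
          (fun w => classUnif c u * ν w * ((fixedPts (u * w) : ℝ) - 1))
          (fun s => classUnif c u * ν (u⁻¹ * s) * ((fixedPts s : ℝ) - 1)) (fun w => ?_)).symm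
        simp [Equiv.mulLeft]
    _ = ∑ w : Equiv.Perm (Fin n), ∑ u : Equiv.Perm (Fin n),
          classUnif c u * ν w * ((fixedPts (u * w) : ℝ) - 1) := Finset.sum_comm
    _ = ∑ w : Equiv.Perm (Fin n), ν w *
          ∑ u : Equiv.Perm (Fin n), classUnif c u * ((fixedPts (u * w) : ℝ) - 1) := by
        refine Finset.sum_congr rfl fun w _ => ?_
        rw [Finset.mul_sum]
        exact Finset.sum_congr rfl fun u _ => by ring
    _ = ∑ w : Equiv.Perm (Fin n), ν w *
          ((1 - (c.support.card : ℝ) / ((n : ℝ) - 1)) * ((fixedPts w : ℝ) - 1)) := by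
        exact Finset.sum_congr rfl fun w _ => by rw [hinner w]
    _ = (1 - (c.support.card : ℝ) / ((n : ℝ) - 1)) *
          ∑ s : Equiv.Perm (Fin n), ν s * ((fixedPts s : ℝ) - 1) := by
        rw [Finset.mul_sum]
        exact Finset.sum_congr rfl fun w _ => by ring

end FixAux

/-- **First-moment formula.** Let `C` be the conjugacy class of `c` in `S_n` with `k ≥ 1`
non-fixed points and `t ≥ 1`. Then the expectation of `fix(σ) − 1` under `μ_C^{*t}` is
`(n−1)·(1 − k/(n−1))^t`. -/
theorem expectation_fix_sub_one (n : ℕ) (c : Equiv.Perm (Fin n))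
    (hk : 1 ≤ c.support.card) (t : ℕ) (ht : 1 ≤ t) :
    ∑ s : Equiv.Perm (Fin n), convPow (classUnif c) t s * ((fixedPts s : ℝ) - 1) =
      ((n : ℝ) - 1) * (1 - (c.support.card : ℝ) / ((n : ℝ) - 1)) ^ t := by
  have hne1 : c.support.card ≠ 1 := Equiv.Perm.card_support_ne_one c
  have hk2 : 2 ≤ c.support.card := by omega
  have hn : 2 ≤ n := le_trans hk2
    (by simpa using Finset.card_le_card (Finset.subset_univ c.support))
  clear ht hk
  induction t with
  | zero =>
      have h1 : fixedPts (1 : Equiv.Perm (Fin n)) = n := by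
        simp [fixedPts]
      simp only [convPow, pow_zero, mul_one]
      rw [Finset.sum_eq_single_of_mem 1 (Finset.mem_univ 1)
        (fun s _ hs => by rw [if_neg hs, zero_mul])]
      rw [if_pos rfl, one_mul, h1]
  | succ t ih =>
      have hdef : convPow (classUnif c) (t + 1) = conv (classUnif c) (convPow (classUnif c) t) :=
        rfl
      rw [hdef, FixAux.step c hn, ih]
      ring
end
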